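/- arXiv:2305.12917 — 3 statements merged into one kernel-verified Lean document; each statement's English description precedes it below -/
import Mathlib

section
/- Let (A, m, η) be an isometric Frobenius algebra on a finite-dimensional Hilbert space, and let (M, ρ : M ⊗ A → M) be a right A-module with ρ ρ† = id_M. Then (ρ ⊗ id_A)(id_M ⊗ m†) = ρ†ρ = (id_M ⊗ m)(ρ† ⊗ id_A) as maps M ⊗ A → M ⊗ A. -/
open Matrix Kronecker Finset

namespace ModuleFrobeniusAux




lemma idem_contraction_herm {I : Type*} [Fintype I] [DecidableEq I]
    (N : Matrix I I ℂ) (hidem : N * N = N)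
    (hcon : ∀ x : I → ℂ, ∑ i, Complex.normSq ((N *ᵥ x) i) ≤ ∑ i, Complex.normSq (x i)) :
    Nᴴ = N := by
  have key : ∀ u v, (∑ i, N i u * (starRingEnd ℂ) ((1 - N) i v)) = 0 := by
    intro u v
    set x : I → ℂ := fun i => N i u with hx
    set y : I → ℂ := fun i => (1 - N) i v with hy
    have hNx : N *ᵥ x = x := by
      ext i
      have h : (N * N) i u = N i u := by rw [hidem]
      simpa [Matrix.mulVec, dotProduct, Matrix.mul_apply, hx] using h
    have hNy : N *ᵥ y = 0 := by
      ext i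
      have h : (N * (1 - N)) i v = 0 := by
        rw [Matrix.mul_sub, Matrix.mul_one, hidem, sub_self]
        rfl
      simpa [Matrix.mulVec, dotProduct, Matrix.mul_apply, hy] using h
    set c : ℂ := ∑ i, x i * (starRingEnd ℂ) (y i) with hc
    set Y : ℝ := ∑ i, Complex.normSq (y i) with hYdef
    have hY : (0:ℝ) ≤ Y := Finset.sum_nonneg fun i _ => Complex.normSq_nonneg _
    set ε : ℝ := 1 / (Y + 1) with hε
    have hεpos : 0 < ε := by positivity
    have hεY : ε * Y < 1 := by
      rw [hε, div_mul_eq_mul_div, div_lt_one (by linarith)]; linarith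
    set t : ℂ := -(ε : ℂ) * c with ht
    set z : I → ℂ := x + t • y with hz
    have hNz : N *ᵥ z = x := by
      rw [hz, Matrix.mulVec_add, Matrix.mulVec_smul, hNx, hNy, smul_zero, add_zero]
    have hconjtc : (starRingEnd ℂ) t * c = -(ε : ℂ) * Complex.normSq c := by
      rw [ht, _root_.map_mul, map_neg]
      simp only [Complex.conj_ofReal]
      rw [mul_assoc, mul_comm ((starRingEnd ℂ) c) c, Complex.mul_conj]
      skip
    have hexp : ∑ i, Complex.normSq (z i) =
        (∑ i, Complex.normSq (x i)) +
          (Complex.normSq t * Y - 2 * (ε * Complex.normSq c)) := by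
      have h1 : ∀ i, Complex.normSq (z i) = Complex.normSq (x i)
          + Complex.normSq t * Complex.normSq (y i)
          + 2 * ((starRingEnd ℂ) t * (x i * (starRingEnd ℂ) (y i))).re := by
        intro i
        have hzi : z i = x i + t * y i := rfl
        rw [hzi, Complex.normSq_add, Complex.normSq_mul]
        congr 2
        · congr 1
          rw [_root_.map_mul]
          ring
      rw [Finset.sum_congr rfl (fun i _ => h1 i)]
      rw [Finset.sum_add_distrib, Finset.sum_add_distrib, ← Finset.mul_sum, ← hYdef]
      have h2 : ∑ i, 2 * ((starRingEnd ℂ) t * (x i * (starRingEnd ℂ) (y i))).re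
          = - (2 * (ε * Complex.normSq c)) := by
        rw [← Finset.mul_sum, ← Complex.re_sum, ← Finset.mul_sum, ← hc, hconjtc]
        have h3 : (-(ε:ℂ)) * (Complex.normSq c : ℂ) = ((-(ε * Complex.normSq c) : ℝ) : ℂ) := by
          push_cast; ring
        rw [h3, Complex.ofReal_re]
        ring
      rw [h2]; ring
    have hle := hcon z
    rw [hNz, hexp] at hle
    have hnormt : Complex.normSq t = ε^2 * Complex.normSq c := by
      rw [ht, Complex.normSq_mul, Complex.normSq_neg, Complex.normSq_ofReal]
      ring
    rw [hnormt] at hle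
    set s : ℝ := Complex.normSq c with hs
    have hs0 : 0 ≤ s := Complex.normSq_nonneg c
    have hfin : s = 0 := by
      rcases lt_or_eq_of_le hs0 with hpos | heq
      · exfalso
        have hmul : (ε * Y) * (ε * s) < 1 * (ε * s) :=
          mul_lt_mul_of_pos_right hεY (mul_pos hεpos hpos)
        nlinarith
      · exact heq.symm
    exact Complex.normSq_eq_zero.mp hfin
  have h0 : Nᴴ * (1 - N) = 0 := by
    ext u v
    have h2 : (starRingEnd ℂ) (∑ i, N i u * (starRingEnd ℂ) ((1 - N) i v)) = 0 := by
      rw [key u v]; simp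
    rw [map_sum] at h2
    simp only [_root_.map_mul, RingHomCompTriple.comp_apply, Complex.conj_conj] at h2
    simpa [Matrix.mul_apply, Matrix.conjTranspose_apply] using h2
  have h1 : Nᴴ = Nᴴ * N := by
    have h := h0
    rwa [Matrix.mul_sub, Matrix.mul_one, sub_eq_zero] at h
  have h2 : N = Nᴴ * N := by
    have h := congrArg Matrix.conjTranspose h1
    rwa [Matrix.conjTranspose_conjTranspose, Matrix.conjTranspose_mul,
      Matrix.conjTranspose_conjTranspose] at h
  rw [h1, ← h2]


-- generic extraction of the module axiom, applies to hmod and hassoc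
lemma mod_entry {n k : ℕ}
    (m : Matrix (Fin n) (Fin n × Fin n) ℂ)
    (ρ : Matrix (Fin k) (Fin k × Fin n) ℂ)
    (hmod : ρ * (ρ ⊗ₖ (1 : Matrix (Fin n) (Fin n) ℂ)) =
      (ρ * ((1 : Matrix (Fin k) (Fin k) ℂ) ⊗ₖ m)).submatrix id
        (Equiv.prodAssoc (Fin k) (Fin n) (Fin n))) :
    ∀ p q a b, (∑ x, ρ p (x,b) * ρ x (q,a)) = ∑ y, ρ p (q,y) * m y (a,b) := by
  intro p q a b
  have h := congrFun (congrFun hmod p) ((q,a),b)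
  simp only [Matrix.mul_apply, Matrix.kroneckerMap_apply, Matrix.submatrix_apply,
    Matrix.one_apply, Fintype.sum_prod_type, Equiv.prodAssoc_apply, id_eq,
    mul_ite, mul_one, mul_zero, ite_mul, zero_mul, one_mul,
    Finset.sum_ite_eq, Finset.sum_ite_eq', Finset.mem_univ, if_true] at h
  rw [h, Finset.sum_comm]
  simp

lemma unit_entry {n : ℕ}
    (m : Matrix (Fin n) (Fin n × Fin n) ℂ) (η : Matrix (Fin n) Unit ℂ)
    (hunitr : m * ((1 : Matrix (Fin n) (Fin n) ℂ) ⊗ₖ η) =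
      (1 : Matrix (Fin n) (Fin n) ℂ).submatrix id Prod.fst) :
    ∀ i a, (∑ y, m i (a,y) * η y ()) = if i = a then 1 else 0 := by
  intro i a
  have h := congrFun (congrFun hunitr i) (a, ())
  simp only [Matrix.mul_apply, Matrix.kroneckerMap_apply, Matrix.submatrix_apply,
    Matrix.one_apply, Fintype.sum_prod_type, id_eq,
    mul_ite, mul_one, mul_zero, ite_mul, zero_mul, one_mul,
    Finset.sum_ite_eq, Finset.sum_ite_eq', Finset.mem_univ, if_true] at h
  rw [← h, Finset.sum_comm]
  simp

lemma iso_entry {I J : Type*} [Fintype J] [DecidableEq I]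
    (ρ : Matrix I J ℂ) (h : ρ * ρᴴ = 1) :
    ∀ p r, (∑ z, ρ p z * (starRingEnd ℂ) (ρ r z)) = if p = r then 1 else 0 := by
  intro p r
  have hh := congrFun (congrFun h p) r
  simpa [Matrix.mul_apply, Matrix.conjTranspose_apply, Matrix.one_apply] using hh


variable {n k : ℕ}

lemma sum4_swap {α : Type*} [AddCommMonoid α] {A B C D : Type*}
    [Fintype A] [Fintype B] [Fintype C] [Fintype D] (f : A → B → C → D → α) :
    (∑ a, ∑ b, ∑ c, ∑ d, f a b c d) = ∑ c, ∑ d, ∑ a, ∑ b, f a b c d := by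
  calc (∑ a, ∑ b, ∑ c, ∑ d, f a b c d)
      = ∑ a, ∑ c, ∑ d, ∑ b, f a b c d := by
        refine Finset.sum_congr rfl fun a _ => ?_
        rw [Finset.sum_comm]
        exact Finset.sum_congr rfl fun c _ => Finset.sum_comm
    _ = ∑ c, ∑ a, ∑ d, ∑ b, f a b c d := Finset.sum_comm
    _ = ∑ c, ∑ d, ∑ a, ∑ b, f a b c d :=
        Finset.sum_congr rfl fun c _ => Finset.sum_comm

set_option maxRecDepth 10000 in
lemma F_entry (m : Matrix (Fin n) (Fin n × Fin n) ℂ)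
    (ρ : Matrix (Fin k) (Fin k × Fin n) ℂ) (p : Fin k) (a : Fin n) (q : Fin k) (b : Fin n) :
    ((ρ ⊗ₖ (1 : Matrix (Fin n) (Fin n) ℂ)) *
        (((1 : Matrix (Fin k) (Fin k) ℂ) ⊗ₖ mᴴ).submatrix
          (Equiv.prodAssoc (Fin k) (Fin n) (Fin n)) id)) (p,a) (q,b)
      = ∑ d, ρ p (q,d) * (starRingEnd ℂ) (m b (d,a)) := by
  simp only [Matrix.mul_apply, Matrix.kroneckerMap_apply, Matrix.submatrix_apply,
    Matrix.one_apply, Matrix.conjTranspose_apply, Fintype.sum_prod_type,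
    Equiv.prodAssoc_apply, id_eq, mul_ite, mul_one, mul_zero, ite_mul, zero_mul, one_mul,
    Finset.sum_ite_eq, Finset.sum_ite_eq', Finset.mem_univ, if_true]
  have hsplit : ∀ x : Fin k, (∑ x_1 : Fin n, ∑ x_2 : Fin n,
      if x = q then if a = x_2 then ρ p (x, x_1) * star (m b (x_1, x_2)) else 0 else 0)
      = if x = q then (∑ x_1 : Fin n, ρ p (x,x_1) * star (m b (x_1, a))) else 0 := by
    intro x; split_ifs with hx <;> simp
  rw [Finset.sum_congr rfl fun x _ => hsplit x,
    Finset.sum_ite_eq' Finset.univ q (fun x => ∑ x_1 : Fin n, ρ p (x,x_1) * star (m b (x_1, a)))]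
  simp only [Finset.mem_univ, if_true, starRingEnd_apply]

lemma idem_sum (m : Matrix (Fin n) (Fin n × Fin n) ℂ)
    (ρ : Matrix (Fin k) (Fin k × Fin n) ℂ)
    (h5 : ∀ p q a b, (∑ x, ρ p (x,b) * ρ x (q,a)) = ∑ y, ρ p (q,y) * m y (a,b))
    (h1 : ∀ p q a b, (∑ x, m p (x,b) * m x (q,a)) = ∑ y, m p (q,y) * m y (a,b))
    (h4 : ∀ p r, (∑ z, m p z * (starRingEnd ℂ) (m r z)) = if p = r then 1 else 0)
    (p : Fin k) (a : Fin n) (q : Fin k) (b : Fin n) :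
    (∑ s, ∑ e, (∑ d, ρ p (s,d) * (starRingEnd ℂ) (m e (d,a))) *
        (∑ c, ρ s (q,c) * (starRingEnd ℂ) (m b (c,e))))
      = ∑ x, ρ p (q,x) * (starRingEnd ℂ) (m b (x,a)) := by
  calc (∑ s, ∑ e, (∑ d, ρ p (s,d) * (starRingEnd ℂ) (m e (d,a))) *
        (∑ c, ρ s (q,c) * (starRingEnd ℂ) (m b (c,e))))
      = ∑ s, ∑ e, ∑ d, ∑ c, (ρ p (s,d) * ρ s (q,c)) *
          ((starRingEnd ℂ) (m e (d,a)) * (starRingEnd ℂ) (m b (c,e))) := by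
        refine Finset.sum_congr rfl fun s _ => Finset.sum_congr rfl fun e _ => ?_
        rw [Finset.sum_mul_sum]
        exact Finset.sum_congr rfl fun d _ => Finset.sum_congr rfl fun c _ => by ring
    _ = ∑ d, ∑ c, ∑ s, ∑ e, (ρ p (s,d) * ρ s (q,c)) *
          ((starRingEnd ℂ) (m e (d,a)) * (starRingEnd ℂ) (m b (c,e))) := sum4_swap _
    _ = ∑ d, ∑ c, (∑ s, ρ p (s,d) * ρ s (q,c)) *
          (∑ e, (starRingEnd ℂ) (m e (d,a)) * (starRingEnd ℂ) (m b (c,e))) := by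
        refine Finset.sum_congr rfl fun d _ => Finset.sum_congr rfl fun c _ => ?_
        rw [Finset.sum_mul_sum]
    _ = ∑ d, ∑ c, (∑ y, ρ p (q,y) * m y (c,d)) *
          (∑ x, (starRingEnd ℂ) (m b (x,a)) * (starRingEnd ℂ) (m x (c,d))) := by
        refine Finset.sum_congr rfl fun d _ => Finset.sum_congr rfl fun c _ => ?_
        rw [h5 p q c d]
        congr 1
        have hL : ∑ e, (starRingEnd ℂ) (m e (d,a)) * (starRingEnd ℂ) (m b (c,e))
            = (starRingEnd ℂ) (∑ e, m e (d,a) * m b (c,e)) := by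
          rw [map_sum]; exact Finset.sum_congr rfl fun e _ => (map_mul _ _ _).symm
        have hR : ∑ x, (starRingEnd ℂ) (m b (x,a)) * (starRingEnd ℂ) (m x (c,d))
            = (starRingEnd ℂ) (∑ x, m b (x,a) * m x (c,d)) := by
          rw [map_sum]; exact Finset.sum_congr rfl fun e _ => (map_mul _ _ _).symm
        rw [hL, hR]
        congr 1
        rw [h1 b c d a]
        exact Finset.sum_congr rfl fun e _ => mul_comm _ _
    _ = ∑ d, ∑ c, ∑ y, ∑ x, (ρ p (q,y) * (starRingEnd ℂ) (m b (x,a))) *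
          (m y (c,d) * (starRingEnd ℂ) (m x (c,d))) := by
        refine Finset.sum_congr rfl fun d _ => Finset.sum_congr rfl fun c _ => ?_
        rw [Finset.sum_mul_sum]
        exact Finset.sum_congr rfl fun y _ => Finset.sum_congr rfl fun x _ => by ring
    _ = ∑ y, ∑ x, ∑ d, ∑ c, (ρ p (q,y) * (starRingEnd ℂ) (m b (x,a))) *
          (m y (c,d) * (starRingEnd ℂ) (m x (c,d))) := sum4_swap _
    _ = ∑ y, ∑ x, (ρ p (q,y) * (starRingEnd ℂ) (m b (x,a))) *
          (∑ z : Fin n × Fin n, m y z * (starRingEnd ℂ) (m x z)) := by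
        refine Finset.sum_congr rfl fun y _ => Finset.sum_congr rfl fun x _ => ?_
        rw [Finset.mul_sum, Fintype.sum_prod_type, Finset.sum_comm]
    _ = ∑ y, ∑ x, (ρ p (q,y) * (starRingEnd ℂ) (m b (x,a))) *
          (if y = x then 1 else 0) := by
        refine Finset.sum_congr rfl fun y _ => Finset.sum_congr rfl fun x _ => ?_
        rw [h4 y x]
    _ = ∑ x, ρ p (q,x) * (starRingEnd ℂ) (m b (x,a)) := by
        simp only [mul_ite, mul_one, mul_zero, Finset.sum_ite_eq, Finset.mem_univ, if_true]

lemma sum3_swap {α : Type*} [AddCommMonoid α] {A B C : Type*}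
    [Fintype A] [Fintype B] [Fintype C] (f : A → B → C → α) :
    (∑ a, ∑ b, ∑ c, f a b c) = ∑ b, ∑ c, ∑ a, f a b c := by
  rw [Finset.sum_comm]
  exact Finset.sum_congr rfl fun b _ => Finset.sum_comm

lemma assembly (m : Matrix (Fin n) (Fin n × Fin n) ℂ) (η : Matrix (Fin n) Unit ℂ)
    (ρ : Matrix (Fin k) (Fin k × Fin n) ℂ)
    (h5 : ∀ p q a b, (∑ x, ρ p (x,b) * ρ x (q,a)) = ∑ y, ρ p (q,y) * m y (a,b))
    (star_ρ : ∀ p q a, (∑ y, ∑ d, η y () * (ρ p (q,d) * (starRingEnd ℂ) (m y (d,a))))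
      = (starRingEnd ℂ) (ρ q (p,a)))
    (star_m : ∀ p q a, (∑ y, ∑ d, η y () * (m p (q,d) * (starRingEnd ℂ) (m y (d,a))))
      = (starRingEnd ℂ) (m q (p,a)))
    (p : Fin k) (a : Fin n) (q : Fin k) (b : Fin n) :
    (∑ r, (starRingEnd ℂ) (ρ r (p,a)) * ρ r (q,b))
      = ∑ x, ρ p (q,x) * (starRingEnd ℂ) (m b (x,a)) := by
  calc (∑ r, (starRingEnd ℂ) (ρ r (p,a)) * ρ r (q,b))
      = ∑ r, (∑ y, ∑ d, η y () * (ρ p (r,d) * (starRingEnd ℂ) (m y (d,a)))) * ρ r (q,b) := by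
        exact Finset.sum_congr rfl fun r _ => by rw [star_ρ p r a]
    _ = ∑ r, ∑ y, ∑ d, (η y () * (starRingEnd ℂ) (m y (d,a))) * (ρ p (r,d) * ρ r (q,b)) := by
        refine Finset.sum_congr rfl fun r _ => ?_
        rw [Finset.sum_mul]
        refine Finset.sum_congr rfl fun y _ => ?_
        rw [Finset.sum_mul]
        exact Finset.sum_congr rfl fun d _ => by ring
    _ = ∑ y, ∑ d, ∑ r, (η y () * (starRingEnd ℂ) (m y (d,a))) * (ρ p (r,d) * ρ r (q,b)) :=
        sum3_swap _
    _ = ∑ y, ∑ d, (η y () * (starRingEnd ℂ) (m y (d,a))) * (∑ z, ρ p (q,z) * m z (b,d)) := by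
        refine Finset.sum_congr rfl fun y _ => Finset.sum_congr rfl fun d _ => ?_
        rw [← Finset.mul_sum, h5 p q b d]
    _ = ∑ y, ∑ d, ∑ z, (ρ p (q,z)) * (η y () * (m z (b,d) * (starRingEnd ℂ) (m y (d,a)))) := by
        refine Finset.sum_congr rfl fun y _ => Finset.sum_congr rfl fun d _ => ?_
        rw [Finset.mul_sum]
        exact Finset.sum_congr rfl fun z _ => by ring
    _ = ∑ z, ∑ y, ∑ d, (ρ p (q,z)) * (η y () * (m z (b,d) * (starRingEnd ℂ) (m y (d,a)))) := by
        rw [sum3_swap]; exact sum3_swap _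
    _ = ∑ z, ρ p (q,z) * (starRingEnd ℂ) (m b (z,a)) := by
        refine Finset.sum_congr rfl fun z _ => ?_
        have hpull : ∀ y : Fin n, (∑ d, ρ p (q,z) * (η y () * (m z (b,d) * (starRingEnd ℂ) (m y (d,a)))))
            = ρ p (q,z) * ∑ d, η y () * (m z (b,d) * (starRingEnd ℂ) (m y (d,a))) :=
          fun y => (Finset.mul_sum _ _ _).symm
        rw [Finset.sum_congr rfl fun y _ => hpull y, ← Finset.mul_sum, star_m z b a]


lemma kron_CT {I J K L : Type*} (A : Matrix I J ℂ) (B : Matrix K L ℂ) :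
    (A ⊗ₖ B)ᴴ = Aᴴ ⊗ₖ Bᴴ := by
  ext ⟨i, x⟩ ⟨j, y⟩
  simp [Matrix.conjTranspose_apply, Matrix.kroneckerMap_apply, mul_comm]

lemma submatrix_mul_id {I I' J K : Type*} [Fintype J] (M : Matrix I J ℂ) (N : Matrix J K ℂ)
    (e : I' → I) : M.submatrix e id * N = (M * N).submatrix e id := by
  ext i j
  simp [Matrix.mul_apply, Matrix.submatrix_apply]

lemma quad_eq {I J : Type*} [Fintype I] [Fintype J] (A : Matrix J I ℂ) (x : I → ℂ) :
    dotProduct (star x) ((Aᴴ * A) *ᵥ x)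
      = ((∑ j, Complex.normSq ((A *ᵥ x) j) : ℝ) : ℂ) := by
  rw [← Matrix.mulVec_mulVec, Matrix.dotProduct_mulVec, ← Matrix.star_mulVec]
  rw [Complex.ofReal_sum]
  simp only [dotProduct, Pi.star_apply]
  refine Finset.sum_congr rfl fun j _ => ?_
  exact Complex.normSq_eq_conj_mul_self.symm

lemma star_aux (n k : ℕ)
    (m : Matrix (Fin n) (Fin n × Fin n) ℂ) (η : Matrix (Fin n) Unit ℂ)
    (hassoc : m * (m ⊗ₖ (1 : Matrix (Fin n) (Fin n) ℂ)) =
      (m * ((1 : Matrix (Fin n) (Fin n) ℂ) ⊗ₖ m)).submatrix id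
        (Equiv.prodAssoc (Fin n) (Fin n) (Fin n)))
    (hunitr : m * ((1 : Matrix (Fin n) (Fin n) ℂ) ⊗ₖ η) =
      (1 : Matrix (Fin n) (Fin n) ℂ).submatrix id Prod.fst)
    (hiso : m * mᴴ = 1)
    (ρ : Matrix (Fin k) (Fin k × Fin n) ℂ)
    (hmod : ρ * (ρ ⊗ₖ (1 : Matrix (Fin n) (Fin n) ℂ)) =
      (ρ * ((1 : Matrix (Fin k) (Fin k) ℂ) ⊗ₖ m)).submatrix id
        (Equiv.prodAssoc (Fin k) (Fin n) (Fin n)))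
    (hpiso : ρ * ρᴴ = 1) :
    (∀ p q a, (∑ y, ∑ d, η y () * (ρ p (q,d) * (starRingEnd ℂ) (m y (d,a))))
      = (starRingEnd ℂ) (ρ q (p,a)))
    ∧ ((ρ ⊗ₖ (1 : Matrix (Fin n) (Fin n) ℂ)) *
        (((1 : Matrix (Fin k) (Fin k) ℂ) ⊗ₖ mᴴ).submatrix
          (Equiv.prodAssoc (Fin k) (Fin n) (Fin n)) id))ᴴ
      = ((ρ ⊗ₖ (1 : Matrix (Fin n) (Fin n) ℂ)) *
        (((1 : Matrix (Fin k) (Fin k) ℂ) ⊗ₖ mᴴ).submatrix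
          (Equiv.prodAssoc (Fin k) (Fin n) (Fin n)) id)) := by
  set e : (Fin k × Fin n) × Fin n ≃ Fin k × (Fin n × Fin n) :=
    Equiv.prodAssoc (Fin k) (Fin n) (Fin n) with he
  set W : Matrix ((Fin k × Fin n) × Fin n) (Fin k × Fin n) ℂ :=
    ((1 : Matrix (Fin k) (Fin k) ℂ) ⊗ₖ mᴴ).submatrix e id with hW
  set F : Matrix (Fin k × Fin n) (Fin k × Fin n) ℂ :=
    (ρ ⊗ₖ (1 : Matrix (Fin n) (Fin n) ℂ)) * W with hF
  set E : Matrix (Fin k × Fin n) (Fin k × Fin n) ℂ := ρᴴ * ρ with hE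
  have h5 := mod_entry m ρ hmod
  have h1 := mod_entry m m hassoc
  have h4 := iso_entry m hiso
  have h3 := unit_entry m η hunitr
  have hFent : ∀ (p : Fin k) (a : Fin n) (q : Fin k) (b : Fin n),
      F (p,a) (q,b) = ∑ d, ρ p (q,d) * (starRingEnd ℂ) (m b (d,a)) :=
    fun p a q b => F_entry m ρ p a q b
  -- ρ * F = ρ
  have hM1 : ρ * F = ρ := by
    rw [hF, ← Matrix.mul_assoc, hmod, hW, Matrix.submatrix_mul_equiv, Matrix.submatrix_id_id,
      Matrix.mul_assoc, ← Matrix.mul_kronecker_mul, hiso, Matrix.one_mul, Matrix.one_kronecker_one,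
      Matrix.mul_one]
  -- F * ρᴴ = ρᴴ
  have hmodH := congrArg Matrix.conjTranspose hmod
  rw [Matrix.conjTranspose_mul, Matrix.conjTranspose_submatrix, Matrix.conjTranspose_mul,
    kron_CT, kron_CT] at hmodH
  simp only [Matrix.conjTranspose_one] at hmodH
  have hM3 : F * ρᴴ = ρᴴ := by
    rw [hF, Matrix.mul_assoc, hW, submatrix_mul_id, ← hmodH, ← Matrix.mul_assoc,
      ← Matrix.mul_kronecker_mul, hpiso, Matrix.mul_one, Matrix.one_kronecker_one, Matrix.one_mul]
  -- E facts
  have hEH : Eᴴ = E := by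
    rw [hE, Matrix.conjTranspose_mul, Matrix.conjTranspose_conjTranspose]
  have hEE : E * E = E := by
    rw [hE, Matrix.mul_assoc, ← Matrix.mul_assoc ρ ρᴴ ρ, hpiso, Matrix.one_mul]
  have hEF : E * F = E := by
    rw [hE, Matrix.mul_assoc, hM1]
  have hFE : F * E = E := by
    rw [hE, ← Matrix.mul_assoc, hM3]
  -- idempotency of F
  have hidemF : F * F = F := by
    ext pa qb
    obtain ⟨p, a⟩ := pa
    obtain ⟨q, b⟩ := qb
    rw [Matrix.mul_apply, hFent p a q b]
    calc (∑ j : Fin k × Fin n, F (p,a) j * F j (q,b))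
        = ∑ s, ∑ e2, F (p,a) (s,e2) * F (s,e2) (q,b) := by
          rw [Fintype.sum_prod_type]
      _ = ∑ s, ∑ e2, (∑ d, ρ p (s,d) * (starRingEnd ℂ) (m e2 (d,a))) *
            (∑ c, ρ s (q,c) * (starRingEnd ℂ) (m b (c,e2))) := by
          exact Finset.sum_congr rfl fun s _ => Finset.sum_congr rfl fun e2 _ => by
            rw [hFent p a s e2, hFent s e2 q b]
      _ = ∑ x, ρ p (q,x) * (starRingEnd ℂ) (m b (x,a)) := idem_sum m ρ h5 h1 h4 p a q b
  -- N and hermiticity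
  set N : Matrix (Fin k × Fin n) (Fin k × Fin n) ℂ := F - E with hN
  have hNidem : N * N = N := by
    rw [hN]
    have hexp : (F - E) * (F - E) = F * F - F * E - E * F + E * E := by noncomm_ring
    rw [hexp, hidemF, hEF, hFE, hEE]; abel
  have hWiso : Wᴴ * W = 1 := by
    rw [hW, Matrix.conjTranspose_submatrix, kron_CT]
    simp only [Matrix.conjTranspose_one, Matrix.conjTranspose_conjTranspose]
    rw [Matrix.submatrix_mul_equiv, Matrix.submatrix_id_id, ← Matrix.mul_kronecker_mul,
      hiso, Matrix.one_mul, Matrix.one_kronecker_one]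
  set Y : Matrix ((Fin k × Fin n) × Fin n) (Fin k × Fin n) ℂ :=
    ((1 - E) ⊗ₖ (1 : Matrix (Fin n) (Fin n) ℂ)) * W with hY
  have hFHF : Fᴴ * F = Wᴴ * ((E ⊗ₖ (1 : Matrix (Fin n) (Fin n) ℂ)) * W) := by
    rw [hF, Matrix.conjTranspose_mul, kron_CT]
    simp only [Matrix.conjTranspose_one]
    rw [Matrix.mul_assoc, ← Matrix.mul_assoc (ρᴴ ⊗ₖ (1 : Matrix (Fin n) (Fin n) ℂ)),
      ← Matrix.mul_kronecker_mul, Matrix.one_mul (1 : Matrix (Fin n) (Fin n) ℂ), ← hE]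
  have h1mE : (1 - E) * (1 - E) = 1 - E := by
    have hexp : (1 - E) * (1 - E) = 1 - E - E + E * E := by noncomm_ring
    rw [hexp, hEE]; abel
  have hYY : Yᴴ * Y = Wᴴ * (((1 - E) ⊗ₖ (1 : Matrix (Fin n) (Fin n) ℂ)) * W) := by
    rw [hY, Matrix.conjTranspose_mul, kron_CT]
    have h1mEH : (1 - E)ᴴ = 1 - E := by
      rw [Matrix.conjTranspose_sub, Matrix.conjTranspose_one, hEH]
    simp only [Matrix.conjTranspose_one, h1mEH]
    rw [Matrix.mul_assoc, ← Matrix.mul_assoc ((1 - E) ⊗ₖ (1 : Matrix (Fin n) (Fin n) ℂ)),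
      ← Matrix.mul_kronecker_mul, Matrix.one_mul (1 : Matrix (Fin n) (Fin n) ℂ), h1mE]
  have hNH : Nᴴ = Fᴴ - E := by rw [hN, Matrix.conjTranspose_sub, hEH]
  have hFHE : Fᴴ * E = E := by rw [← hEH, ← Matrix.conjTranspose_mul, hEF, hEH]
  have hNN : Nᴴ * N = Fᴴ * F - E := by
    rw [hNH, hN]
    have hexp : (Fᴴ - E) * (F - E) = Fᴴ * F - Fᴴ * E - E * F + E * E := by noncomm_ring
    rw [hexp, hFHE, hEF, hEE]; abel
  have hkey : Wᴴ * ((E ⊗ₖ (1 : Matrix (Fin n) (Fin n) ℂ)) * W)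
      + Wᴴ * (((1 - E) ⊗ₖ (1 : Matrix (Fin n) (Fin n) ℂ)) * W) = 1 := by
    rw [← Matrix.mul_add, ← Matrix.add_mul, ← Matrix.add_kronecker]
    have : E + (1 - E) = (1 : Matrix (Fin k × Fin n) (Fin k × Fin n) ℂ) := by abel
    rw [this, Matrix.one_kronecker_one, Matrix.one_mul, hWiso]
  have hsum : Nᴴ * N + (Yᴴ * Y + ρᴴ * ρ) = 1 := by
    rw [hNN, hYY, hFHF, ← hE]
    calc Wᴴ * ((E ⊗ₖ (1 : Matrix (Fin n) (Fin n) ℂ)) * W) - E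
          + (Wᴴ * (((1 - E) ⊗ₖ (1 : Matrix (Fin n) (Fin n) ℂ)) * W) + E)
        = Wᴴ * ((E ⊗ₖ (1 : Matrix (Fin n) (Fin n) ℂ)) * W)
          + Wᴴ * (((1 - E) ⊗ₖ (1 : Matrix (Fin n) (Fin n) ℂ)) * W) := by abel
      _ = 1 := hkey
  have hcon : ∀ x : (Fin k × Fin n) → ℂ,
      ∑ i, Complex.normSq ((N *ᵥ x) i) ≤ ∑ i, Complex.normSq (x i) := by
    intro x
    have hof : ((∑ i, Complex.normSq (x i) : ℝ) : ℂ)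
        = ((∑ i, Complex.normSq ((N *ᵥ x) i) : ℝ) : ℂ)
          + (((∑ j, Complex.normSq ((Y *ᵥ x) j) : ℝ) : ℂ)
          + ((∑ j, Complex.normSq ((ρ *ᵥ x) j) : ℝ) : ℂ)) := by
      rw [← quad_eq N x, ← quad_eq Y x, ← quad_eq ρ x, ← dotProduct_add,
        ← Matrix.add_mulVec, ← dotProduct_add, ← Matrix.add_mulVec, hsum,
        Matrix.one_mulVec, Complex.ofReal_sum]
      simp only [dotProduct, Pi.star_apply]
      refine Finset.sum_congr rfl fun i _ => ?_
      rw [show star (x i) = (starRingEnd ℂ) (x i) from rfl]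
      exact Complex.normSq_eq_conj_mul_self
    have hreal := congrArg Complex.re hof
    simp only [Complex.add_re, Complex.ofReal_re] at hreal
    have hy : 0 ≤ ∑ j, Complex.normSq ((Y *ᵥ x) j) :=
      Finset.sum_nonneg fun j _ => Complex.normSq_nonneg _
    have hr : 0 ≤ ∑ j, Complex.normSq ((ρ *ᵥ x) j) :=
      Finset.sum_nonneg fun j _ => Complex.normSq_nonneg _
    linarith
  have hNherm := idem_contraction_herm N hNidem hcon
  have hFherm : Fᴴ = F := by
    rw [hNH, hN] at hNherm
    have h := congrArg (fun X => X + E) hNherm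
    simpa [sub_add_cancel] using h
  have etaF : ∀ p q b, (∑ e2, (starRingEnd ℂ) (η e2 ()) * F (p,e2) (q,b)) = ρ p (q,b) := by
    intro p q b
    calc (∑ e2, (starRingEnd ℂ) (η e2 ()) * F (p,e2) (q,b))
        = ∑ e2, ∑ d, (starRingEnd ℂ) (η e2 ()) * (ρ p (q,d) * (starRingEnd ℂ) (m b (d,e2))) := by
          refine Finset.sum_congr rfl fun e2 _ => ?_
          rw [hFent p e2 q b, Finset.mul_sum]
      _ = ∑ d, ∑ e2, (starRingEnd ℂ) (η e2 ()) * (ρ p (q,d) * (starRingEnd ℂ) (m b (d,e2))) :=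
          Finset.sum_comm
      _ = ∑ d, ρ p (q,d) * (starRingEnd ℂ) (∑ e2, m b (d,e2) * η e2 ()) := by
          refine Finset.sum_congr rfl fun d _ => ?_
          rw [map_sum, Finset.mul_sum]
          refine Finset.sum_congr rfl fun e2 _ => ?_
          rw [_root_.map_mul]
          ring
      _ = ∑ d, ρ p (q,d) * (starRingEnd ℂ) (if b = d then 1 else 0) := by
          refine Finset.sum_congr rfl fun d _ => ?_
          rw [h3 b d]
      _ = ρ p (q,b) := by
          simp only [apply_ite (starRingEnd ℂ), _root_.map_one, _root_.map_zero, mul_ite,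
            mul_one, mul_zero, Finset.sum_ite_eq, Finset.mem_univ, if_true]
  refine ⟨?_, hFherm⟩
  intro p q a
  calc (∑ y, ∑ d, η y () * (ρ p (q,d) * (starRingEnd ℂ) (m y (d,a))))
      = ∑ y, η y () * F (p,a) (q,y) := by
        refine Finset.sum_congr rfl fun y _ => ?_
        rw [hFent p a q y, Finset.mul_sum]
    _ = ∑ y, η y () * (starRingEnd ℂ) (F (q,y) (p,a)) := by
        refine Finset.sum_congr rfl fun y _ => ?_
        congr 1
        rw [← congrFun (congrFun hFherm (p,a)) (q,y)]
        rfl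
    _ = (starRingEnd ℂ) (∑ y, (starRingEnd ℂ) (η y ()) * F (q,y) (p,a)) := by
        rw [map_sum]
        refine Finset.sum_congr rfl fun y _ => ?_
        rw [_root_.map_mul, Complex.conj_conj]
    _ = (starRingEnd ℂ) (ρ q (p,a)) := by rw [etaF q p a]

lemma conj_goal1 (n k : ℕ)
    (m : Matrix (Fin n) (Fin n × Fin n) ℂ) (η : Matrix (Fin n) Unit ℂ)
    (hassoc : m * (m ⊗ₖ (1 : Matrix (Fin n) (Fin n) ℂ)) =
      (m * ((1 : Matrix (Fin n) (Fin n) ℂ) ⊗ₖ m)).submatrix id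
        (Equiv.prodAssoc (Fin n) (Fin n) (Fin n)))
    (hunitr : m * ((1 : Matrix (Fin n) (Fin n) ℂ) ⊗ₖ η) =
      (1 : Matrix (Fin n) (Fin n) ℂ).submatrix id Prod.fst)
    (hiso : m * mᴴ = 1)
    (ρ : Matrix (Fin k) (Fin k × Fin n) ℂ)
    (hmod : ρ * (ρ ⊗ₖ (1 : Matrix (Fin n) (Fin n) ℂ)) =
      (ρ * ((1 : Matrix (Fin k) (Fin k) ℂ) ⊗ₖ m)).submatrix id
        (Equiv.prodAssoc (Fin k) (Fin n) (Fin n)))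
    (hpiso : ρ * ρᴴ = 1) :
    (ρ ⊗ₖ (1 : Matrix (Fin n) (Fin n) ℂ)) *
        (((1 : Matrix (Fin k) (Fin k) ℂ) ⊗ₖ mᴴ).submatrix
          (Equiv.prodAssoc (Fin k) (Fin n) (Fin n)) id) = ρᴴ * ρ := by
  obtain ⟨star_ρ, -⟩ := star_aux n k m η hassoc hunitr hiso ρ hmod hpiso
  obtain ⟨star_m, -⟩ := star_aux n n m η hassoc hunitr hiso m hassoc hiso
  have h5 := mod_entry m ρ hmod
  ext pa qb
  obtain ⟨p, a⟩ := pa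
  obtain ⟨q, b⟩ := qb
  rw [F_entry m ρ p a q b, Matrix.mul_apply, ← assembly m η ρ h5 star_ρ star_m p a q b]
  refine Finset.sum_congr rfl fun r _ => ?_
  rw [Matrix.conjTranspose_apply]
  rfl

end ModuleFrobeniusAux

/-- For an isometric Frobenius algebra `(A, m, η)` (`A = ℂⁿ` as matrices) and a right
`A`-module `(M, ρ)` with `ρρ† = id_M`, one has
`(ρ ⊗ id_A)(id_M ⊗ m†) = ρ†ρ = (id_M ⊗ m)(ρ† ⊗ id_A)` as maps `M ⊗ A → M ⊗ A`. -/
theorem module_frobenius_condition (n k : ℕ)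
    (m : Matrix (Fin n) (Fin n × Fin n) ℂ) (η : Matrix (Fin n) Unit ℂ)
    (hassoc : m * (m ⊗ₖ (1 : Matrix (Fin n) (Fin n) ℂ)) =
      (m * ((1 : Matrix (Fin n) (Fin n) ℂ) ⊗ₖ m)).submatrix id
        (Equiv.prodAssoc (Fin n) (Fin n) (Fin n)))
    (hunitl : m * (η ⊗ₖ (1 : Matrix (Fin n) (Fin n) ℂ)) =
      (1 : Matrix (Fin n) (Fin n) ℂ).submatrix id Prod.snd)
    (hunitr : m * ((1 : Matrix (Fin n) (Fin n) ℂ) ⊗ₖ η) =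
      (1 : Matrix (Fin n) (Fin n) ℂ).submatrix id Prod.fst)
    (hiso : m * mᴴ = 1)
    (ρ : Matrix (Fin k) (Fin k × Fin n) ℂ)
    (hmod : ρ * (ρ ⊗ₖ (1 : Matrix (Fin n) (Fin n) ℂ)) =
      (ρ * ((1 : Matrix (Fin k) (Fin k) ℂ) ⊗ₖ m)).submatrix id
        (Equiv.prodAssoc (Fin k) (Fin n) (Fin n)))
    (hmodunit : ρ * ((1 : Matrix (Fin k) (Fin k) ℂ) ⊗ₖ η) =
      (1 : Matrix (Fin k) (Fin k) ℂ).submatrix id Prod.fst)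
    (hpiso : ρ * ρᴴ = 1) :
    (ρ ⊗ₖ (1 : Matrix (Fin n) (Fin n) ℂ)) *
        (((1 : Matrix (Fin k) (Fin k) ℂ) ⊗ₖ mᴴ).submatrix
          (Equiv.prodAssoc (Fin k) (Fin n) (Fin n)) id) = ρᴴ * ρ ∧
      ((1 : Matrix (Fin k) (Fin k) ℂ) ⊗ₖ m) *
        ((ρᴴ ⊗ₖ (1 : Matrix (Fin n) (Fin n) ℂ)).submatrix
          (Equiv.prodAssoc (Fin k) (Fin n) (Fin n)).symm id) = ρᴴ * ρ := by
  have goal1 := ModuleFrobeniusAux.conj_goal1 n k m η hassoc hunitr hiso ρ hmod hpiso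
  refine ⟨goal1, ?_⟩
  have hT : ((1 : Matrix (Fin k) (Fin k) ℂ) ⊗ₖ m) *
      ((ρᴴ ⊗ₖ (1 : Matrix (Fin n) (Fin n) ℂ)).submatrix
        (Equiv.prodAssoc (Fin k) (Fin n) (Fin n)).symm id)
      = ((ρ ⊗ₖ (1 : Matrix (Fin n) (Fin n) ℂ)) *
        (((1 : Matrix (Fin k) (Fin k) ℂ) ⊗ₖ mᴴ).submatrix
          (Equiv.prodAssoc (Fin k) (Fin n) (Fin n)) id))ᴴ := by
    rw [Matrix.conjTranspose_mul, Matrix.conjTranspose_submatrix, ModuleFrobeniusAux.kron_CT,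
      ModuleFrobeniusAux.kron_CT]
    simp only [Matrix.conjTranspose_one, Matrix.conjTranspose_conjTranspose]
    rw [show (ρᴴ ⊗ₖ (1 : Matrix (Fin n) (Fin n) ℂ))
        = (ρᴴ ⊗ₖ (1 : Matrix (Fin n) (Fin n) ℂ)).submatrix id id from
        (Matrix.submatrix_id_id _).symm]
    rw [Matrix.submatrix_id_mul_right]
    rw [Matrix.submatrix_id_id]
  rw [hT, goal1, Matrix.conjTranspose_mul, Matrix.conjTranspose_conjTranspose]
end

section
/- With the same setup (isometric Frobenius algebra A, right A-module M with ρρ† = id_M, left A-module N with λλ† = id_N), the projection P = (ρ ⊗ id_N)(id_M ⊗ λ†) satisfies the balancing identity P(ρ ⊗ id_N) = P(id_M ⊗ λ) as maps M ⊗ A ⊗ N → M ⊗ N. -/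
open Matrix Kronecker


private lemma four_swap {α β γ δ : Type*} [Fintype α] [Fintype β] [Fintype γ] [Fintype δ]
    (f : α → β → γ → δ → ℂ) :
    ∑ a, ∑ b, ∑ c, ∑ d, f a b c d = ∑ c, ∑ d, ∑ a, ∑ b, f a b c d :=
  calc ∑ a, ∑ b, ∑ c, ∑ d, f a b c d
      = ∑ a, ∑ c, ∑ b, ∑ d, f a b c d :=
        Finset.sum_congr rfl fun _ _ => Finset.sum_comm
    _ = ∑ c, ∑ a, ∑ b, ∑ d, f a b c d := Finset.sum_comm
    _ = ∑ c, ∑ a, ∑ d, ∑ b, f a b c d :=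
        Finset.sum_congr rfl fun _ _ => Finset.sum_congr rfl fun _ _ => Finset.sum_comm
    _ = ∑ c, ∑ d, ∑ a, ∑ b, f a b c d :=
        Finset.sum_congr rfl fun _ _ => Finset.sum_comm

private lemma key_sum (n k p : ℕ)
    (m : Matrix (Fin n) (Fin n × Fin n) ℂ)
    (ρ : Matrix (Fin k) (Fin k × Fin n) ℂ)
    (lam : Matrix (Fin p) (Fin n × Fin p) ℂ)
    (hmod' : ∀ a e w v, ∑ c, ρ a (c, v) * ρ c (e, w) = ∑ g, ρ a (e, g) * m g (w, v))
    (hlmod' : ∀ f w v b, ∑ d, lam f (w, d) * lam d (v, b) = ∑ g, lam f (g, b) * m g (w, v))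
    (hiso' : ∀ g g', ∑ v, ∑ w, m g (w, v) * (starRingEnd ℂ) (m g' (w, v)) =
      if g = g' then 1 else 0)
    (a : Fin k) (b : Fin p) (e : Fin k) (f : Fin p) :
    ∑ c, ∑ d, (∑ v, ρ a (c, v) * (starRingEnd ℂ) (lam d (v, b))) *
        (∑ w, ρ c (e, w) * (starRingEnd ℂ) (lam f (w, d))) =
      ∑ g, ρ a (e, g) * (starRingEnd ℂ) (lam f (g, b)) := by
  have hlam2 : ∀ v w, (∑ d, (starRingEnd ℂ) (lam f (w, d)) * (starRingEnd ℂ) (lam d (v, b))) =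
      ∑ g, (starRingEnd ℂ) (lam f (g, b)) * (starRingEnd ℂ) (m g (w, v)) := by
    intro v w
    have h := congrArg (starRingEnd ℂ) (hlmod' f w v b)
    simpa only [map_sum, _root_.map_mul] using h
  calc ∑ c, ∑ d, (∑ v, ρ a (c, v) * (starRingEnd ℂ) (lam d (v, b))) *
        (∑ w, ρ c (e, w) * (starRingEnd ℂ) (lam f (w, d)))
      = ∑ c, ∑ d, ∑ v, ∑ w, (ρ a (c, v) * (starRingEnd ℂ) (lam d (v, b))) *
          (ρ c (e, w) * (starRingEnd ℂ) (lam f (w, d))) := by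
        exact Finset.sum_congr rfl fun c _ => Finset.sum_congr rfl fun d _ =>
          Finset.sum_mul_sum _ _ _ _
    _ = ∑ v, ∑ w, ∑ c, ∑ d, (ρ a (c, v) * (starRingEnd ℂ) (lam d (v, b))) *
          (ρ c (e, w) * (starRingEnd ℂ) (lam f (w, d))) := four_swap _
    _ = ∑ v, ∑ w, (∑ c, ρ a (c, v) * ρ c (e, w)) *
          (∑ d, (starRingEnd ℂ) (lam f (w, d)) * (starRingEnd ℂ) (lam d (v, b))) := by
        refine Finset.sum_congr rfl fun v _ => Finset.sum_congr rfl fun w _ => ?_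
        rw [Finset.sum_mul_sum]
        exact Finset.sum_congr rfl fun c _ => Finset.sum_congr rfl fun d _ => by ring
    _ = ∑ v, ∑ w, (∑ g, ρ a (e, g) * m g (w, v)) *
          (∑ g', (starRingEnd ℂ) (lam f (g', b)) * (starRingEnd ℂ) (m g' (w, v))) := by
        refine Finset.sum_congr rfl fun v _ => Finset.sum_congr rfl fun w _ => ?_
        rw [hmod', hlam2]
    _ = ∑ v, ∑ w, ∑ g, ∑ g', (ρ a (e, g) * m g (w, v)) *
          ((starRingEnd ℂ) (lam f (g', b)) * (starRingEnd ℂ) (m g' (w, v))) := by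
        exact Finset.sum_congr rfl fun v _ => Finset.sum_congr rfl fun w _ =>
          Finset.sum_mul_sum _ _ _ _
    _ = ∑ g, ∑ g', ∑ v, ∑ w, (ρ a (e, g) * m g (w, v)) *
          ((starRingEnd ℂ) (lam f (g', b)) * (starRingEnd ℂ) (m g' (w, v))) := four_swap _
    _ = ∑ g, ∑ g', (ρ a (e, g) * (starRingEnd ℂ) (lam f (g', b))) *
          ∑ v, ∑ w, m g (w, v) * (starRingEnd ℂ) (m g' (w, v)) := by
        refine Finset.sum_congr rfl fun g _ => Finset.sum_congr rfl fun g' _ => ?_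
        rw [Finset.mul_sum]
        refine Finset.sum_congr rfl fun v _ => ?_
        rw [Finset.mul_sum]
        exact Finset.sum_congr rfl fun w _ => by ring
    _ = ∑ g, ∑ g', (ρ a (e, g) * (starRingEnd ℂ) (lam f (g', b))) *
          if g = g' then 1 else 0 := by
        refine Finset.sum_congr rfl fun g _ => Finset.sum_congr rfl fun g' _ => ?_
        rw [hiso']
    _ = ∑ g, ρ a (e, g) * (starRingEnd ℂ) (lam f (g, b)) := by
        simp [mul_ite, Finset.sum_ite_eq]

private lemma kron_conjT {l m o q : Type*} (A : Matrix l m ℂ) (B : Matrix o q ℂ) :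
    (A ⊗ₖ B)ᴴ = Aᴴ ⊗ₖ Bᴴ := by
  ext ⟨i, j⟩ ⟨i', j'⟩
  simp [conjTranspose_apply, _root_.map_mul]

theorem relative_tensor_balancing_aux (n k p : ℕ)
    (m : Matrix (Fin n) (Fin n × Fin n) ℂ)
    (hiso : m * mᴴ = 1)
    (ρ : Matrix (Fin k) (Fin k × Fin n) ℂ)
    (hmod : ρ * (ρ ⊗ₖ (1 : Matrix (Fin n) (Fin n) ℂ)) =
      (ρ * ((1 : Matrix (Fin k) (Fin k) ℂ) ⊗ₖ m)).submatrix id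
        (Equiv.prodAssoc (Fin k) (Fin n) (Fin n)))
    (hpiso : ρ * ρᴴ = 1)
    (lam : Matrix (Fin p) (Fin n × Fin p) ℂ)
    (hlmod : lam * ((1 : Matrix (Fin n) (Fin n) ℂ) ⊗ₖ lam) =
      (lam * (m ⊗ₖ (1 : Matrix (Fin p) (Fin p) ℂ))).submatrix id
        (Equiv.prodAssoc (Fin n) (Fin n) (Fin p)).symm)
    (hlpiso : lam * lamᴴ = 1) :
    ((ρ ⊗ₖ (1 : Matrix (Fin p) (Fin p) ℂ)) *
        (((1 : Matrix (Fin k) (Fin k) ℂ) ⊗ₖ lamᴴ).submatrix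
          (Equiv.prodAssoc (Fin k) (Fin n) (Fin p)) id)) *
      (ρ ⊗ₖ (1 : Matrix (Fin p) (Fin p) ℂ)) =
    ((ρ ⊗ₖ (1 : Matrix (Fin p) (Fin p) ℂ)) *
        (((1 : Matrix (Fin k) (Fin k) ℂ) ⊗ₖ lamᴴ).submatrix
          (Equiv.prodAssoc (Fin k) (Fin n) (Fin p)) id)) *
      (((1 : Matrix (Fin k) (Fin k) ℂ) ⊗ₖ lam).submatrix id
        (Equiv.prodAssoc (Fin k) (Fin n) (Fin p))) := by
  -- entrywise forms of the hypotheses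
  have hmod' : ∀ a e w v, ∑ c, ρ a (c, v) * ρ c (e, w) = ∑ g, ρ a (e, g) * m g (w, v) := by
    intro a e w v
    have h := congrFun (congrFun hmod a) ((e, w), v)
    simpa [mul_apply, Fintype.sum_prod_type, kroneckerMap_apply, one_apply,
      Equiv.prodAssoc, mul_ite, ite_mul, Finset.sum_ite_eq, Finset.sum_ite_eq'] using h
  have hlmod' : ∀ f w v b, ∑ d, lam f (w, d) * lam d (v, b) = ∑ g, lam f (g, b) * m g (w, v) := by
    intro f w v b
    have h := congrFun (congrFun hlmod f) (w, (v, b))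
    simpa [mul_apply, Fintype.sum_prod_type, kroneckerMap_apply, one_apply,
      Equiv.prodAssoc, mul_ite, ite_mul, Finset.sum_ite_eq, Finset.sum_ite_eq',
      mul_comm] using h
  have hiso' : ∀ g g', ∑ v, ∑ w, m g (w, v) * (starRingEnd ℂ) (m g' (w, v)) =
      if g = g' then 1 else 0 := by
    intro g g'
    have h := congrFun (congrFun hiso g) g'
    rw [Finset.sum_comm]
    simpa [mul_apply, Fintype.sum_prod_type, conjTranspose_apply, one_apply] using h
  set R : Matrix (Fin k × Fin p) ((Fin k × Fin n) × Fin p) ℂ :=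
    ρ ⊗ₖ (1 : Matrix (Fin p) (Fin p) ℂ) with hR
  set S : Matrix ((Fin k × Fin n) × Fin p) (Fin k × Fin p) ℂ :=
    ((1 : Matrix (Fin k) (Fin k) ℂ) ⊗ₖ lamᴴ).submatrix
      (Equiv.prodAssoc (Fin k) (Fin n) (Fin p)) id with hS
  set T : Matrix (Fin k × Fin p) ((Fin k × Fin n) × Fin p) ℂ :=
    ((1 : Matrix (Fin k) (Fin k) ℂ) ⊗ₖ lam).submatrix id
      (Equiv.prodAssoc (Fin k) (Fin n) (Fin p)) with hT
  set P : Matrix (Fin k × Fin p) (Fin k × Fin p) ℂ := R * S with hP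
  -- entry formula for P
  have hPe : ∀ a b c d, P (a, b) (c, d) = ∑ v, ρ a (c, v) * (starRingEnd ℂ) (lam d (v, b)) := by
    intro a b c d
    simp [hP, hR, hS, mul_apply, Fintype.sum_prod_type, kroneckerMap_apply, one_apply,
      conjTranspose_apply, Equiv.prodAssoc, mul_ite, ite_mul, Finset.sum_ite_eq,
      Finset.sum_ite_eq']
  -- P is idempotent
  have hPP : P * P = P := by
    ext ⟨a, b⟩ ⟨e, f⟩
    rw [mul_apply, Fintype.sum_prod_type]
    simp only [hPe]
    exact key_sum n k p m ρ lam hmod' hlmod' hiso' a b e f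
  -- conjugate-transpose relations
  have hTS : Tᴴ = S := by
    rw [hT, hS, conjTranspose_submatrix, kron_conjT, conjTranspose_one]
  have hRR : R * Rᴴ = 1 := by
    rw [hR, kron_conjT, conjTranspose_one, ← mul_kronecker_mul, hpiso, Matrix.mul_one,
      one_kronecker_one]
  have hTT : T * Tᴴ = 1 := by
    rw [hTS, hT, hS, submatrix_mul_equiv, ← mul_kronecker_mul, hlpiso, Matrix.one_mul,
      one_kronecker_one, submatrix_id_id]
  have hRT : R * Tᴴ = P := by rw [hTS, hP]
  have hTR : T * Rᴴ = Pᴴ := by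
    rw [← conjTranspose_conjTranspose T, ← conjTranspose_mul, hRT]
  -- the difference squares to zero
  have hX : (P * R - P * T) * (P * R - P * T)ᴴ = 0 := by
    have expand : (P * R - P * T) * (P * R - P * T)ᴴ =
        P * (R * Rᴴ) * Pᴴ - P * (R * Tᴴ) * Pᴴ - (P * (T * Rᴴ) * Pᴴ - P * (T * Tᴴ) * Pᴴ) := by
      simp only [conjTranspose_sub, conjTranspose_mul, Matrix.sub_mul, Matrix.mul_sub,
        Matrix.mul_assoc]
      abel
    rw [expand, hRR, hRT, hTR, hTT, Matrix.mul_one, hPP,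
      Matrix.mul_assoc P Pᴴ Pᴴ, ← conjTranspose_mul, hPP]
    abel
  open scoped ComplexOrder in
  exact sub_eq_zero.mp (Matrix.self_mul_conjTranspose_eq_zero.mp hX)

/-- With `(A, m, η)` an isometric Frobenius algebra, `(M, ρ)` a right `A`-module with
`ρρ† = id_M`, and `(N, lam)` a left `A`-module with `lam lam† = id_N`, the projection
`P = (ρ ⊗ id_N)(id_M ⊗ lam†)` satisfies the balancing identity
`P (ρ ⊗ id_N) = P (id_M ⊗ lam)` as maps `M ⊗ A ⊗ N → M ⊗ N`. -/
theorem relative_tensor_balancing (n k p : ℕ)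
    (m : Matrix (Fin n) (Fin n × Fin n) ℂ) (η : Matrix (Fin n) Unit ℂ)
    (hassoc : m * (m ⊗ₖ (1 : Matrix (Fin n) (Fin n) ℂ)) =
      (m * ((1 : Matrix (Fin n) (Fin n) ℂ) ⊗ₖ m)).submatrix id
        (Equiv.prodAssoc (Fin n) (Fin n) (Fin n)))
    (hunitl : m * (η ⊗ₖ (1 : Matrix (Fin n) (Fin n) ℂ)) =
      (1 : Matrix (Fin n) (Fin n) ℂ).submatrix id Prod.snd)
    (hunitr : m * ((1 : Matrix (Fin n) (Fin n) ℂ) ⊗ₖ η) =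
      (1 : Matrix (Fin n) (Fin n) ℂ).submatrix id Prod.fst)
    (hiso : m * mᴴ = 1)
    (ρ : Matrix (Fin k) (Fin k × Fin n) ℂ)
    (hmod : ρ * (ρ ⊗ₖ (1 : Matrix (Fin n) (Fin n) ℂ)) =
      (ρ * ((1 : Matrix (Fin k) (Fin k) ℂ) ⊗ₖ m)).submatrix id
        (Equiv.prodAssoc (Fin k) (Fin n) (Fin n)))
    (hmodunit : ρ * ((1 : Matrix (Fin k) (Fin k) ℂ) ⊗ₖ η) =
      (1 : Matrix (Fin k) (Fin k) ℂ).submatrix id Prod.fst)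
    (hpiso : ρ * ρᴴ = 1)
    (lam : Matrix (Fin p) (Fin n × Fin p) ℂ)
    (hlmod : lam * ((1 : Matrix (Fin n) (Fin n) ℂ) ⊗ₖ lam) =
      (lam * (m ⊗ₖ (1 : Matrix (Fin p) (Fin p) ℂ))).submatrix id
        (Equiv.prodAssoc (Fin n) (Fin n) (Fin p)).symm)
    (hlmodunit : lam * (η ⊗ₖ (1 : Matrix (Fin p) (Fin p) ℂ)) =
      (1 : Matrix (Fin p) (Fin p) ℂ).submatrix id Prod.snd)
    (hlpiso : lam * lamᴴ = 1) :
    ((ρ ⊗ₖ (1 : Matrix (Fin p) (Fin p) ℂ)) *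
        (((1 : Matrix (Fin k) (Fin k) ℂ) ⊗ₖ lamᴴ).submatrix
          (Equiv.prodAssoc (Fin k) (Fin n) (Fin p)) id)) *
      (ρ ⊗ₖ (1 : Matrix (Fin p) (Fin p) ℂ)) =
    ((ρ ⊗ₖ (1 : Matrix (Fin p) (Fin p) ℂ)) *
        (((1 : Matrix (Fin k) (Fin k) ℂ) ⊗ₖ lamᴴ).submatrix
          (Equiv.prodAssoc (Fin k) (Fin n) (Fin p)) id)) *
      (((1 : Matrix (Fin k) (Fin k) ℂ) ⊗ₖ lam).submatrix id
        (Equiv.prodAssoc (Fin k) (Fin n) (Fin p))) := by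
  exact relative_tensor_balancing_aux n k p m hiso ρ hmod hpiso lam hlmod hlpiso
end

section
/- Let G be a finite group, R = ℂ[G] the left regular representation, and (Q, β) an object of the Drinfeld center of Rep G (Q a representation with natural isomorphisms β_{Q,V} : Q ⊗ V → V ⊗ Q satisfying the hexagon). For h ∈ G define P_h : Q → Q by P_h(a) = (δ_h ⊗ id_Q)(β_{Q,R}(a ⊗ e)), where δ_h : R → ℂ is the coordinate functional at h and e ∈ R is the identity basis element. Then P_h P_g = δ_{h,g} P_h and Σ_{h∈G} P_h = id_Q; hence Q is G-graded by the images of the P_h. -/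
open TensorProduct

/-- An object of the Drinfeld center of `Rep G`: a representation `Q` together with a
family of natural isomorphisms `β_{Q,V} : Q ⊗ V ≅ V ⊗ Q` (G-equivariant, natural in
`V`, and satisfying the hexagon condition). -/
structure HalfBraiding {G : Type} [Group G] {Q : Type} [AddCommGroup Q] [Module ℂ Q]
    (ρQ : Representation ℂ G Q) where
  β : ∀ (V : Type) [AddCommGroup V] [Module ℂ V],
    Representation ℂ G V → ((Q ⊗[ℂ] V) ≃ₗ[ℂ] (V ⊗[ℂ] Q))
  equivariant : ∀ (V : Type) [AddCommGroup V] [Module ℂ V]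
    (ρV : Representation ℂ G V) (g : G),
    TensorProduct.map (ρV g) (ρQ g) ∘ₗ (β V ρV).toLinearMap =
      (β V ρV).toLinearMap ∘ₗ TensorProduct.map (ρQ g) (ρV g)
  natural : ∀ (V W : Type) [AddCommGroup V] [Module ℂ V] [AddCommGroup W] [Module ℂ W]
    (ρV : Representation ℂ G V) (ρW : Representation ℂ G W) (f : V →ₗ[ℂ] W),
    (∀ g : G, f ∘ₗ ρV g = ρW g ∘ₗ f) →
    TensorProduct.map f (LinearMap.id : Q →ₗ[ℂ] Q) ∘ₗ (β V ρV).toLinearMap =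
      (β W ρW).toLinearMap ∘ₗ TensorProduct.map (LinearMap.id : Q →ₗ[ℂ] Q) f
  hexagon : ∀ (V W : Type) [AddCommGroup V] [Module ℂ V] [AddCommGroup W] [Module ℂ W]
    (ρV : Representation ℂ G V) (ρW : Representation ℂ G W),
    (β (V ⊗[ℂ] W) (ρV.tprod ρW)).toLinearMap =
      (TensorProduct.assoc ℂ V W Q).symm.toLinearMap ∘ₗ
      TensorProduct.map (LinearMap.id : V →ₗ[ℂ] V) (β W ρW).toLinearMap ∘ₗ
      (TensorProduct.assoc ℂ V Q W).toLinearMap ∘ₗ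
      TensorProduct.map (β V ρV).toLinearMap (LinearMap.id : W →ₗ[ℂ] W) ∘ₗ
      (TensorProduct.assoc ℂ Q V W).symm.toLinearMap

private lemma finsupp_eq_sum_single' {G : Type} [Fintype G] [DecidableEq G] (r : G →₀ ℂ) :
    r = ∑ h : G, Finsupp.single h (r h) := by
  ext x
  simp [Finsupp.single_apply, Finset.sum_ite_eq]

private lemma expand_tensor {G : Type} [Fintype G] [DecidableEq G]
    {Q : Type} [AddCommGroup Q] [Module ℂ Q] (x : (G →₀ ℂ) ⊗[ℂ] Q) :
    x = ∑ h : G, Finsupp.single h (1:ℂ) ⊗ₜ[ℂ]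
      (TensorProduct.lid ℂ Q (TensorProduct.map (Finsupp.lapply h) LinearMap.id x)) := by
  induction x using TensorProduct.induction_on with
  | zero => simp
  | tmul r q =>
      simp only [TensorProduct.map_tmul, Finsupp.lapply_apply, LinearMap.id_coe, id_eq,
        TensorProduct.lid_tmul]
      calc r ⊗ₜ[ℂ] q = (∑ h : G, Finsupp.single h (r h)) ⊗ₜ[ℂ] q := by
              rw [← finsupp_eq_sum_single' r]
        _ = ∑ h : G, Finsupp.single h (r h) ⊗ₜ[ℂ] q := by rw [TensorProduct.sum_tmul]
        _ = ∑ h : G, Finsupp.single h (1:ℂ) ⊗ₜ[ℂ] (r h • q) := by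
              refine Finset.sum_congr rfl fun h _ => ?_
              rw [← TensorProduct.smul_tmul]
              congr 1
              ext x
              simp [Finsupp.single_apply]
  | add x y hx hy =>
      simp only [map_add, TensorProduct.tmul_add, Finset.sum_add_distrib]
      rw [← hx, ← hy]

set_option maxHeartbeats 1000000 in
/-- For `(Q, β)` in the Drinfeld center of `Rep G` (`G` finite) and `R = ℂ[G]` the left
regular representation, the operators `P_h(a) = (δ_h ⊗ id_Q)(β_{Q,R}(a ⊗ e))` satisfy
`P_h P_g = δ_{h,g} P_h` and `Σ_h P_h = id_Q`; hence `Q` is `G`-graded by the images of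
the `P_h`. -/
theorem center_object_is_graded {G : Type} [Group G] [Fintype G] [DecidableEq G]
    {Q : Type} [AddCommGroup Q] [Module ℂ Q] (ρQ : Representation ℂ G Q)
    (hb : HalfBraiding ρQ) :
    let R := G →₀ ℂ
    let ρR : Representation ℂ G R :=
      (((MonoidAlgebra.coeffLinearEquiv ℂ : MonoidAlgebra ℂ G ≃ₗ[ℂ] (G →₀ ℂ)).conjAlgEquiv ℂ).toAlgHom.toMonoidHom).comp
        (Representation.ofMulAction ℂ G G)
    let P : G → (Q →ₗ[ℂ] Q) := fun h =>
      (TensorProduct.lid ℂ Q).toLinearMap ∘ₗ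
      TensorProduct.map (Finsupp.lapply h) (LinearMap.id : Q →ₗ[ℂ] Q) ∘ₗ
      (hb.β R ρR).toLinearMap ∘ₗ
      ((TensorProduct.mk ℂ Q R).flip (Finsupp.single 1 1))
    (∀ h g : G, P h ∘ₗ P g = if h = g then P h else 0) ∧
    (∑ h : G, P h) = LinearMap.id ∧
    DirectSum.IsInternal (fun h : G => LinearMap.range (P h)) := by
  intro R ρR P
  set e : R := Finsupp.single (1:G) (1:ℂ) with he
  set βR := (hb.β R ρR).toLinearMap with hβR
  set E : G → R := fun h => Finsupp.single h (1:ℂ) with hE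
  -- β(a ⊗ e) expanded in the standard basis of R
  have hbe : ∀ a : Q, βR (a ⊗ₜ[ℂ] e) = ∑ h : G, E h ⊗ₜ[ℂ] P h a := by
    intro a
    exact expand_tensor (βR (a ⊗ₜ[ℂ] e))
  -- the comultiplication-like intertwiner Δ : R → R ⊗ R
  set Δ : R →ₗ[ℂ] (R ⊗[ℂ] R) :=
    Finsupp.lsum ℂ (fun g : G => LinearMap.toSpanSingleton ℂ _ (E g ⊗ₜ[ℂ] E g)) with hΔdef
  have hΔsingle : ∀ (g : G) (c : ℂ), Δ (Finsupp.single g c) = c • (E g ⊗ₜ[ℂ] E g) := by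
    intro g c
    rw [hΔdef, Finsupp.lsum_single, LinearMap.toSpanSingleton_apply]
  have hΔe : Δ e = E 1 ⊗ₜ[ℂ] E 1 := by
    rw [he, hΔsingle, one_smul]
  have hρ : ∀ (g x : G) (c : ℂ), (ρR g) (Finsupp.single x c) = Finsupp.single (g * x) c :=
    fun g x c => by
      change (Representation.ofMulAction ℂ G G g (MonoidAlgebra.single x c)).coeff = _
      rw [Representation.ofMulAction_single]
      rfl
  have hΔ : ∀ g : G, Δ ∘ₗ ρR g = (ρR.tprod ρR) g ∘ₗ Δ := by
    intro g
    apply Finsupp.lhom_ext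
    intro x c
    simp only [LinearMap.comp_apply]
    rw [hρ g x c, hΔsingle, hΔsingle, map_smul]
    congr 1
    rw [Representation.tprod_apply, TensorProduct.map_tmul]
    have hEmul : ∀ y : G, (ρR g) (E y) = E (g * y) := fun y => hρ g y 1
    simp only [hEmul]
  -- the key double-sum identity from naturality + hexagon
  have key : ∀ a : Q,
      (∑ h : G, (E h ⊗ₜ[ℂ] E h) ⊗ₜ[ℂ] P h a)
        = ∑ g : G, ∑ h : G, (E g ⊗ₜ[ℂ] E h) ⊗ₜ[ℂ] P h (P g a) := by
    intro a
    have nat1 := LinearMap.congr_fun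
      (hb.natural R (R ⊗[ℂ] R) ρR (ρR.tprod ρR) Δ hΔ) (a ⊗ₜ[ℂ] e)
    simp only [LinearMap.comp_apply, TensorProduct.map_tmul, LinearMap.id_coe, id_eq] at nat1
    -- LHS of nat1
    have lhs1 : (TensorProduct.map Δ LinearMap.id) (βR (a ⊗ₜ[ℂ] e))
        = ∑ h : G, (E h ⊗ₜ[ℂ] E h) ⊗ₜ[ℂ] P h a := by
      rw [hbe a, map_sum]
      refine Finset.sum_congr rfl fun h _ => ?_
      rw [TensorProduct.map_tmul]
      congr 1
      · simpa [hE] using hΔsingle h 1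
    -- RHS of nat1 via the hexagon
    have hex := LinearMap.congr_fun (hb.hexagon R R ρR ρR) (a ⊗ₜ[ℂ] (e ⊗ₜ[ℂ] e))
    simp only [LinearMap.comp_apply, LinearEquiv.coe_coe] at hex
    have s1 : (TensorProduct.assoc ℂ Q R R).symm (a ⊗ₜ[ℂ] (e ⊗ₜ[ℂ] e))
        = (a ⊗ₜ[ℂ] e) ⊗ₜ[ℂ] e := by simp
    have s2 : (TensorProduct.map βR LinearMap.id) ((a ⊗ₜ[ℂ] e) ⊗ₜ[ℂ] e)
        = ∑ g : G, (E g ⊗ₜ[ℂ] P g a) ⊗ₜ[ℂ] e := by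
      rw [TensorProduct.map_tmul, LinearMap.id_coe, id_eq, hbe a, TensorProduct.sum_tmul]
    have s3 : (TensorProduct.assoc ℂ R Q R) (∑ g : G, (E g ⊗ₜ[ℂ] P g a) ⊗ₜ[ℂ] e)
        = ∑ g : G, E g ⊗ₜ[ℂ] (P g a ⊗ₜ[ℂ] e) := by
      rw [map_sum]
      exact Finset.sum_congr rfl fun g _ => by simp
    have s4 : (TensorProduct.map LinearMap.id βR) (∑ g : G, E g ⊗ₜ[ℂ] (P g a ⊗ₜ[ℂ] e))
        = ∑ g : G, ∑ h : G, E g ⊗ₜ[ℂ] (E h ⊗ₜ[ℂ] P h (P g a)) := by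
      rw [map_sum]
      refine Finset.sum_congr rfl fun g _ => ?_
      rw [TensorProduct.map_tmul, LinearMap.id_coe, id_eq, hbe (P g a),
        TensorProduct.tmul_sum]
    have s5 : (TensorProduct.assoc ℂ R R Q).symm
          (∑ g : G, ∑ h : G, E g ⊗ₜ[ℂ] (E h ⊗ₜ[ℂ] P h (P g a)))
        = ∑ g : G, ∑ h : G, (E g ⊗ₜ[ℂ] E h) ⊗ₜ[ℂ] P h (P g a) := by
      rw [map_sum]
      refine Finset.sum_congr rfl fun g _ => ?_
      rw [map_sum]
      exact Finset.sum_congr rfl fun h _ => by simp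
    rw [s1, s2, s3, s4, s5] at hex
    rw [← lhs1, nat1, hΔe]
    exact hex
  -- coefficient extraction
  set Φ : G → G → ((R ⊗[ℂ] R) ⊗[ℂ] Q →ₗ[ℂ] Q) := fun g₀ h₀ =>
    (TensorProduct.lid ℂ Q).toLinearMap ∘ₗ
      TensorProduct.map
        ((TensorProduct.lid ℂ ℂ).toLinearMap ∘ₗ
          TensorProduct.map (Finsupp.lapply g₀) (Finsupp.lapply h₀))
        (LinearMap.id : Q →ₗ[ℂ] Q) with hΦdef
  have hlap : ∀ x y : G,
      (Finsupp.lapply (R := ℂ) x) (E y) = if y = x then (1:ℂ) else 0 := by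
    intro x y
    show (Finsupp.lapply x) (Finsupp.single y (1:ℂ)) = _
    rw [Finsupp.lapply_apply, Finsupp.single_apply]
  have hΦ : ∀ (g₀ h₀ g h : G) (q : Q),
      Φ g₀ h₀ ((E g ⊗ₜ[ℂ] E h) ⊗ₜ[ℂ] q)
        = ((if g = g₀ then (1:ℂ) else 0) * (if h = h₀ then (1:ℂ) else 0)) • q := by
    intro g₀ h₀ g h q
    simp only [hΦdef, LinearMap.comp_apply, TensorProduct.map_tmul, LinearMap.id_coe,
      id_eq, LinearEquiv.coe_coe, TensorProduct.lid_tmul, hlap, smul_smul, smul_eq_mul]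
  have horth : ∀ g₀ h₀ : G, ∀ a : Q,
      P h₀ (P g₀ a) = if g₀ = h₀ then P g₀ a else 0 := by
    intro g₀ h₀ a
    have hk := congrArg (Φ g₀ h₀) (key a)
    rw [map_sum] at hk
    simp only [map_sum, hΦ] at hk
    have hL : ∑ h : G, ((if h = g₀ then (1:ℂ) else 0) * (if h = h₀ then (1:ℂ) else 0)) • P h a
        = if g₀ = h₀ then P g₀ a else 0 := by
      rw [Finset.sum_eq_single g₀]
      · by_cases hgh : g₀ = h₀ <;> simp [hgh]
      · intro b _ hb; simp [hb]
      · intro hb; exact absurd (Finset.mem_univ g₀) hb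
    have hR : ∑ g : G, ∑ h : G,
        ((if g = g₀ then (1:ℂ) else 0) * (if h = h₀ then (1:ℂ) else 0)) • P h (P g a)
        = P h₀ (P g₀ a) := by
      rw [Finset.sum_eq_single g₀]
      · rw [Finset.sum_eq_single h₀] <;> simp_all
      · intro b _ hb; simp [hb]
      · intro hb; exact absurd (Finset.mem_univ g₀) hb
    rw [hL, hR] at hk
    exact hk.symm
  have part1 : ∀ h g : G, P h ∘ₗ P g = if h = g then P h else 0 := by
    intro h g
    apply LinearMap.ext
    intro a
    by_cases hgh : h = g
    · subst hgh
      have := horth h h a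
      rw [if_pos rfl] at this
      simp [this]
    · have := horth g h a
      rw [if_neg (fun hh : g = h => hgh hh.symm)] at this
      simp [hgh, this]
  -- Part 2 : sum of the P h is the identity
  set triv : Representation ℂ G ℂ := Representation.trivial ℂ G ℂ with htriv
  set ε : R →ₗ[ℂ] ℂ := Finsupp.lsum ℂ (fun _ : G => LinearMap.id) with hεdef
  have hεsingle : ∀ (g : G) (c : ℂ), ε (Finsupp.single g c) = c := by
    intro g c
    rw [hεdef, Finsupp.lsum_single, LinearMap.id_apply]
  have hε : ∀ g : G, ε ∘ₗ ρR g = triv g ∘ₗ ε := by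
    intro g
    apply Finsupp.lhom_ext
    intro x c
    simp only [LinearMap.comp_apply]
    rw [hρ g x c, hεsingle, hεsingle]
    simp [htriv, Representation.trivial_apply]
  have hβC : ∀ a : Q, (hb.β ℂ triv) (a ⊗ₜ[ℂ] (1:ℂ)) = (1:ℂ) ⊗ₜ[ℂ] (∑ h : G, P h a) := by
    intro a
    have nat2 := LinearMap.congr_fun (hb.natural R ℂ ρR triv ε hε) (a ⊗ₜ[ℂ] e)
    simp only [LinearMap.comp_apply, TensorProduct.map_tmul, LinearMap.id_coe, id_eq] at nat2
    rw [he, hεsingle] at nat2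
    rw [hbe a, map_sum] at nat2
    have : ∀ h : G, (TensorProduct.map ε (LinearMap.id : Q →ₗ[ℂ] Q)) (E h ⊗ₜ[ℂ] P h a)
        = (1:ℂ) ⊗ₜ[ℂ] P h a := by
      intro h
      rw [TensorProduct.map_tmul, LinearMap.id_coe, id_eq, hE]
      simp [hεsingle]
    simp only [this] at nat2
    rw [← TensorProduct.tmul_sum] at nat2
    exact nat2.symm
  have hlid : ∀ g : G, (TensorProduct.lid ℂ ℂ).toLinearMap ∘ₗ (triv.tprod triv) g
      = triv g ∘ₗ (TensorProduct.lid ℂ ℂ).toLinearMap := by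
    intro g
    apply TensorProduct.ext'
    intro x y
    simp [htriv, Representation.tprod_apply, Representation.trivial_apply]
  have hS2 : ∀ a : Q, (∑ h : G, P h (∑ g : G, P g a)) = ∑ h : G, P h a := by
    intro a
    have nat3 := LinearMap.congr_fun
      (hb.natural (ℂ ⊗[ℂ] ℂ) ℂ (triv.tprod triv) triv (TensorProduct.lid ℂ ℂ).toLinearMap hlid)
      (a ⊗ₜ[ℂ] ((1:ℂ) ⊗ₜ[ℂ] (1:ℂ)))
    simp only [LinearMap.comp_apply, TensorProduct.map_tmul, LinearMap.id_coe, id_eq,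
      LinearEquiv.coe_coe, TensorProduct.lid_tmul, one_smul] at nat3
    -- compute the LHS via the hexagon
    have hex2 := LinearMap.congr_fun (hb.hexagon ℂ ℂ triv triv) (a ⊗ₜ[ℂ] ((1:ℂ) ⊗ₜ[ℂ] (1:ℂ)))
    simp only [LinearMap.comp_apply, LinearEquiv.coe_coe] at hex2
    have t1 : (TensorProduct.assoc ℂ Q ℂ ℂ).symm (a ⊗ₜ[ℂ] ((1:ℂ) ⊗ₜ[ℂ] (1:ℂ)))
        = (a ⊗ₜ[ℂ] (1:ℂ)) ⊗ₜ[ℂ] (1:ℂ) := by simp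
    have t2 : (TensorProduct.map (hb.β ℂ triv).toLinearMap (LinearMap.id : ℂ →ₗ[ℂ] ℂ))
          ((a ⊗ₜ[ℂ] (1:ℂ)) ⊗ₜ[ℂ] (1:ℂ))
        = ((1:ℂ) ⊗ₜ[ℂ] (∑ h : G, P h a)) ⊗ₜ[ℂ] (1:ℂ) := by
      rw [TensorProduct.map_tmul, LinearMap.id_coe, id_eq, LinearEquiv.coe_coe, hβC a]
    have t3 : (TensorProduct.assoc ℂ ℂ Q ℂ) (((1:ℂ) ⊗ₜ[ℂ] (∑ h : G, P h a)) ⊗ₜ[ℂ] (1:ℂ))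
        = (1:ℂ) ⊗ₜ[ℂ] ((∑ h : G, P h a) ⊗ₜ[ℂ] (1:ℂ)) := by simp
    have t4 : (TensorProduct.map (LinearMap.id : ℂ →ₗ[ℂ] ℂ) (hb.β ℂ triv).toLinearMap)
          ((1:ℂ) ⊗ₜ[ℂ] ((∑ h : G, P h a) ⊗ₜ[ℂ] (1:ℂ)))
        = (1:ℂ) ⊗ₜ[ℂ] ((1:ℂ) ⊗ₜ[ℂ] (∑ h : G, P h (∑ g : G, P g a))) := by
      rw [TensorProduct.map_tmul, LinearMap.id_coe, id_eq, LinearEquiv.coe_coe,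
        hβC (∑ g : G, P g a)]
    have t5 : (TensorProduct.assoc ℂ ℂ ℂ Q).symm
          ((1:ℂ) ⊗ₜ[ℂ] ((1:ℂ) ⊗ₜ[ℂ] (∑ h : G, P h (∑ g : G, P g a))))
        = ((1:ℂ) ⊗ₜ[ℂ] (1:ℂ)) ⊗ₜ[ℂ] (∑ h : G, P h (∑ g : G, P g a)) := by simp
    rw [t1, t2, t3, t4, t5] at hex2
    rw [hex2] at nat3
    rw [TensorProduct.map_tmul, LinearEquiv.coe_coe, TensorProduct.lid_tmul, one_smul,
      LinearMap.id_coe, id_eq, hβC a] at nat3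
    have := congrArg (TensorProduct.lid ℂ Q) nat3
    simpa using this
  have part2 : (∑ h : G, P h) = LinearMap.id := by
    apply LinearMap.ext
    intro a
    have hfix : (∑ g : G, P g a) = a := by
      have h1 : (hb.β ℂ triv) ((∑ g : G, P g a) ⊗ₜ[ℂ] (1:ℂ))
          = (hb.β ℂ triv) (a ⊗ₜ[ℂ] (1:ℂ)) := by
        rw [hβC, hβC, hS2 a]
      have h2 := (hb.β ℂ triv).injective h1
      have h3 := congrArg (TensorProduct.rid ℂ Q) h2
      simpa using h3
    simpa [LinearMap.sum_apply] using hfix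
  refine ⟨part1, part2, ?_⟩
  -- Part 3 : internal direct sum
  have hker : ∀ {h g : G}, h ≠ g → LinearMap.range (P g) ≤ LinearMap.ker (P h) := by
    intro h g hhg x hx
    obtain ⟨y, rfl⟩ := hx
    rw [LinearMap.mem_ker, horth g h y, if_neg (fun hh => hhg hh.symm)]
  have hproj : ∀ (h : G) (x : Q), x ∈ LinearMap.range (P h) → P h x = x := by
    intro h x hx
    obtain ⟨y, rfl⟩ := hx
    rw [horth h h y, if_pos rfl]
  apply DirectSum.isInternal_submodule_of_iSupIndep_of_iSup_eq_top
  · intro i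
    rw [disjoint_iff_inf_le]
    intro x hx
    obtain ⟨hx1, hx2⟩ := hx
    have hle : (⨆ (j : G) (_ : j ≠ i), LinearMap.range (P j)) ≤ LinearMap.ker (P i) :=
      iSup_le fun j => iSup_le fun hj => hker (fun hh => hj hh.symm)
    have := hle hx2
    rw [LinearMap.mem_ker] at this
    have hx1' := hproj i x hx1
    simp only [Submodule.mem_bot]
    rw [← hx1', this]
  · rw [Submodule.eq_top_iff']
    intro a
    have : a = ∑ h : G, P h a := by
      conv_lhs => rw [← LinearMap.id_apply (R := ℂ) a, ← part2]
      simp [LinearMap.sum_apply]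
    rw [this]
    exact Submodule.sum_mem _ fun h _ =>
      Submodule.mem_iSup_of_mem h (LinearMap.mem_range_self (P h) a)
end
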